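/- The function Φ is concave on the interval (p̲, ∞); moreover, if ν is not the zero measure, then Φ is strictly increasing on (p̲, ∞). -/

import Mathlib

open MeasureTheory Real Set Filter

noncomputable section

/-- Real power with the convention `0 ^ r = 0` for every exponent `r`. -/
def pw (x r : ℝ) : ℝ := if x = 0 then 0 else x ^ r

/-- The state space `S` of ranked mass configurations: nonincreasing nonnegative
sequences with total sum at most `1` (sum condition stated via partial sums). -/
def inS (s : ℕ → ℝ) : Prop :=
  (∀ i, 0 ≤ s i) ∧ (∀ i, s (i + 1) ≤ s i) ∧ ∀ F : Finset ℕ, ∑ i ∈ F, s i ≤ 1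

/-- The configuration `(1, 0, 0, …)`. -/
def oneConf : ℕ → ℝ := fun i => if i = 0 then 1 else 0

/-- A dislocation measure: a measure on sequences, carried by `S`, giving no mass
to `(1,0,…)`, integrating `1 - s₁`, and conserving total mass (carried by
configurations with `Σ sᵢ = 1`). -/
structure IsDislocation (ν : Measure (ℕ → ℝ)) : Prop where
  carried : ν {s | ¬ (inS s ∧ HasSum s 1)} = 0
  no_one : ν {oneConf} = 0
  int_one_sub : ∫⁻ s, ENNReal.ofReal (1 - s 0) ∂ν < ⊤

/-- `p̲ := inf {p ∈ ℝ : ∫_S Σ_{i≥2} sᵢ^{p+1} ν(ds) < ∞}`, as an extended real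
(possibly `-∞`, and `+∞` if no `p` qualifies). -/
def pLow (ν : Measure (ℕ → ℝ)) : EReal :=
  sInf {x : EReal | ∃ p : ℝ, x = (p : EReal) ∧
    ∫⁻ s, ∑' i, ENNReal.ofReal (pw (s (i + 1)) (p + 1)) ∂ν < ⊤}

/-- `Φ(q) := ∫_S (1 - Σ_{i≥1} sᵢ^{q+1}) ν(ds)`. -/
def Phi (ν : Measure (ℕ → ℝ)) (q : ℝ) : ℝ :=
  ∫ s, (1 - ∑' i, pw (s i) (q + 1)) ∂ν

/-!
Index `i` of a sequence is the paper's `s_{i+1}`. Under `ν`, almost every `s` lies in `S`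
with `0 < s₁ < 1` (mass conservation and `ν {(1,0,…)} = 0`). For such `s` every
`q ↦ sᵢ^{q+1}` is convex and antitone, strictly decreasing for `s₁`, so
`q ↦ 1 - Σ sᵢ^{q+1}` is concave and strictly increasing wherever the series converges; for
almost every `s` that is all of `q > p̲`. Both properties survive integration against `ν`, the
integrand being dominated by a multiple of `1 - s₀` plus the tail `Σ_{i≥1} sᵢ^{q+1}`.
-/

section General

lemma convexOn_tsum {ι E : Type*} [AddCommMonoid E] [Module ℝ E] {D : Set E}
    {f : ι → E → ℝ} (hD : Convex ℝ D) (hf : ∀ i, ConvexOn ℝ D (f i))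
    (hsum : ∀ x ∈ D, Summable fun i => f i x) :
    ConvexOn ℝ D fun x => ∑' i, f i x := by
  refine ⟨hD, fun x hx y hy a b ha hb hab => ?_⟩
  simp only [smul_eq_mul]
  rw [← tsum_mul_left, ← tsum_mul_left,
    ← ((hsum x hx).mul_left a).tsum_add ((hsum y hy).mul_left b)]
  exact Summable.tsum_le_tsum (fun i => (hf i).2 hx hy ha hb hab)
    (hsum _ (hD hx hy ha hb hab)) (((hsum x hx).mul_left a).add ((hsum y hy).mul_left b))

lemma strictAntiOn_tsum {ι α : Type*} [Preorder α] {D : Set α}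
    {f : ι → α → ℝ} {i₀ : ι} (hi₀ : StrictAntiOn (f i₀) D) (hf : ∀ i, AntitoneOn (f i) D)
    (hsum : ∀ x ∈ D, Summable fun i => f i x) :
    StrictAntiOn (fun x => ∑' i, f i x) D := fun x hx y hy hxy =>
  Summable.tsum_lt_tsum (fun i => hf i hx hy hxy.le) (hi₀ hx hy hxy) (hsum y hy) (hsum x hx)

variable {α E : Type*} [MeasurableSpace α] {μ : Measure α} {f : E → α → ℝ} {D : Set E}

lemma concaveOn_integral_of_ae [AddCommMonoid E] [Module ℝ E] (hD : Convex ℝ D)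
    (hint : ∀ x ∈ D, Integrable (f x) μ) (hf : ∀ᵐ ω ∂μ, ConcaveOn ℝ D fun x => f x ω) :
    ConcaveOn ℝ D fun x => ∫ ω, f x ω ∂μ := by
  refine ⟨hD, fun x hx y hy a b ha hb hab => ?_⟩
  have hx' := (hint x hx).const_mul a
  have hy' := (hint y hy).const_mul b
  simp only [smul_eq_mul]
  rw [← integral_const_mul, ← integral_const_mul, ← integral_add hx' hy']
  refine integral_mono_ae (hx'.add hy') (hint _ (hD hx hy ha hb hab)) ?_
  filter_upwards [hf] with ω hω
  simpa only [smul_eq_mul] using hω.2 hx hy ha hb hab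

lemma strictMonoOn_integral_of_ae [Preorder E] (hint : ∀ x ∈ D, Integrable (f x) μ)
    (hf : ∀ᵐ ω ∂μ, StrictMonoOn (fun x => f x ω) D) (hμ : μ ≠ 0) :
    StrictMonoOn (fun x => ∫ ω, f x ω ∂μ) D := by
  intro x hx y hy hxy
  have hpos : ∀ᵐ ω ∂μ, 0 < f y ω - f x ω := by
    filter_upwards [hf] with ω hω using sub_pos.2 (hω hx hy hxy)
  have : NeBot (ae μ) := ae_neBot.2 hμ
  rw [← sub_pos, ← integral_sub (hint y hy) (hint x hx), integral_pos_iff_support_of_nonneg_ae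
    (hpos.mono fun ω h => h.le) ((hint y hy).sub (hint x hx))]
  exact pos_iff_ne_zero.2 <| frequently_ae_iff.1 (hpos.mono fun ω h => h.ne').frequently

end General

lemma abs_one_sub_rpow_le {x y r : ℝ} (hy : 0 < y) (hyx : y ≤ x) (hx : x ≤ 1) :
    |1 - x ^ r| ≤ max r 1 * (1 - x) + y ^ r := by
  have hx0 : 0 < x := hy.trans_le hyx
  have hyr : 0 ≤ y ^ r := by positivity
  rcases le_or_gt 1 r with hr | hr
  · have hbern : 1 + r * (x - 1) ≤ x ^ r := by
      simpa using one_add_mul_self_le_rpow_one_add (s := x - 1) (by linarith) hr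
    rw [abs_of_nonneg (by linarith [Real.rpow_le_one hx0.le hx (by linarith : 0 ≤ r)]),
      max_eq_left hr]
    linarith
  rcases le_or_gt 0 r with hr0 | hr0
  · have hxr : x ≤ x ^ r := by
      simpa using Real.rpow_le_rpow_of_exponent_ge hx0 hx hr.le
    rw [abs_of_nonneg (by linarith [Real.rpow_le_one hx0.le hx hr0]), max_eq_right hr.le]
    linarith
  · have h1x : 1 ≤ x ^ r := Real.one_le_rpow_of_pos_of_le_one_of_nonpos hx0 hx hr0.le
    have hxy : x ^ r ≤ y ^ r := Real.rpow_le_rpow_of_nonpos hy hyx hr0.le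
    rw [abs_of_nonpos (by linarith)]
    nlinarith [le_max_right r 1]

lemma pw_nonneg {x : ℝ} (hx : 0 ≤ x) (r : ℝ) : 0 ≤ pw x r := by
  unfold pw; split_ifs <;> positivity

lemma pw_of_pos {x : ℝ} (hx : 0 < x) (r : ℝ) : pw x r = x ^ r := if_neg hx.ne'

lemma measurable_pw (r : ℝ) : Measurable fun x : ℝ => pw x r :=
  Measurable.ite (measurableSet_singleton 0) measurable_const (measurable_id.pow_const r)

lemma pw_antitone {x : ℝ} (hx0 : 0 ≤ x) (hx1 : x ≤ 1) : Antitone (pw x) := by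
  rcases hx0.eq_or_lt with rfl | hx
  · intro _ _ _; simp [pw]
  · intro r₁ r₂ h
    simp only [pw_of_pos hx]
    exact Real.rpow_le_rpow_of_exponent_ge hx hx1 h

lemma pw_strictAnti {x : ℝ} (hx0 : 0 < x) (hx1 : x < 1) : StrictAnti (pw x) := by
  intro r₁ r₂ h
  simp only [pw_of_pos hx0]
  exact Real.rpow_lt_rpow_of_exponent_gt hx0 hx1 h

lemma convexOn_pw {x : ℝ} (hx : 0 ≤ x) : ConvexOn ℝ univ (pw x) := by
  rcases hx.eq_or_lt with rfl | hx
  · rw [show pw 0 = fun _ => 0 from funext fun _ => if_pos rfl]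
    exact convexOn_const 0 convex_univ
  · simpa only [funext (pw_of_pos hx)] using convexOn_rpow_left hx

namespace inS

variable {s : ℕ → ℝ}

lemma le_one (hs : inS s) (i : ℕ) : s i ≤ 1 := by simpa using hs.2.2 {i}

lemma apply_one_lt_one (hs : inS s) (h1 : 0 < s 1) : s 1 < 1 := by
  have := hs.2.2 {0, 1}
  simp only [Finset.sum_pair zero_ne_one] at this
  linarith [hs.2.1 0]

lemma apply_one_pos (hs : inS s) (hsum : HasSum s 1) (hne : s ≠ oneConf) : 0 < s 1 := by
  refine (hs.1 1).lt_of_ne fun h1 => hne ?_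
  have htail : ∀ j, s (j + 1) = 0 := by
    intro j
    induction j with
    | zero => exact h1.symm
    | succ k ih => exact le_antisymm ((hs.2.1 (k + 1)).trans ih.le) (hs.1 _)
  have hs0 : s 0 = 1 := (hasSum_single 0 fun b hb => by
    obtain ⟨j, rfl⟩ := Nat.exists_eq_succ_of_ne_zero hb; exact htail j).unique hsum
  funext i
  cases i with
  | zero => simpa [oneConf] using hs0
  | succ n => simpa [oneConf] using htail n

end inS

lemma measurable_tsum_ofReal_pw (r : ℝ) :
    Measurable fun s : ℕ → ℝ => ∑' i, ENNReal.ofReal (pw (s (i + 1)) r) :=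
  Measurable.tsum fun i =>
    ENNReal.measurable_ofReal.comp ((measurable_pw r).comp (measurable_pi_apply (i + 1)))

namespace IsDislocation

variable {ν : Measure (ℕ → ℝ)}

lemma ae_inS (hν : IsDislocation ν) : ∀ᵐ s ∂ν, inS s :=
  (ae_iff.2 hν.carried).mono fun _ h => h.1

lemma ae_apply_one_pos (hν : IsDislocation ν) : ∀ᵐ s ∂ν, 0 < s 1 := by
  have hne : ∀ᵐ s ∂ν, s ≠ oneConf := measure_mono_null (fun s hs => by simpa using hs) hν.no_one
  filter_upwards [ae_iff.2 hν.carried, hne] with s hs hne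
  exact hs.1.apply_one_pos hs.2 hne

lemma lintegral_tail_lt_top (hν : IsDislocation ν) {q : ℝ} (hq : pLow ν < q) :
    ∫⁻ s, ∑' i, ENNReal.ofReal (pw (s (i + 1)) (q + 1)) ∂ν < ⊤ := by
  obtain ⟨_, ⟨p, rfl, hp⟩, hpq⟩ := sInf_lt_iff.mp hq
  refine lt_of_le_of_lt (lintegral_mono_ae ?_) hp
  filter_upwards [hν.ae_inS] with s hs
  exact ENNReal.tsum_le_tsum fun i => ENNReal.ofReal_le_ofReal <|
    pw_antitone (hs.1 _) (hs.le_one _) (by linarith [EReal.coe_lt_coe_iff.mp hpq])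

lemma ae_summable_pw (hν : IsDislocation ν) {q : ℝ} (hq : pLow ν < q) :
    ∀ᵐ s ∂ν, Summable fun i => pw (s i) (q + 1) := by
  filter_upwards [hν.ae_inS, ae_lt_top (measurable_tsum_ofReal_pw _)
    (hν.lintegral_tail_lt_top hq).ne] with s hs hfin
  refine (summable_nat_add_iff 1).mp ((ENNReal.summable_toReal hfin.ne).congr fun i => ?_)
  exact ENNReal.toReal_ofReal (pw_nonneg (hs.1 _) _)

/-- Summability at the countably many rational `q > p̲` propagates to every real `q > p̲`,
since `pw x` is antitone for `x ∈ [0, 1]`. -/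
lemma ae_forall_summable_pw (hν : IsDislocation ν) :
    ∀ᵐ s ∂ν, ∀ q : ℝ, pLow ν < q → Summable fun i => pw (s i) (q + 1) := by
  have hrat : ∀ᵐ s ∂ν, ∀ r : ℚ, pLow ν < (r : ℝ) → Summable fun i => pw (s i) (r + 1) := by
    refine ae_all_iff.2 fun r => ?_
    by_cases hr : pLow ν < (r : ℝ)
    · exact (hν.ae_summable_pw hr).mono fun _ h _ => h
    · exact Eventually.of_forall fun _ h => absurd h hr
  filter_upwards [hν.ae_inS, hrat] with s hs hrat q hq
  obtain ⟨r, hr, hrq⟩ := EReal.exists_rat_btwn_of_lt hq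
  exact (hrat r hr).of_nonneg_of_le (fun i => pw_nonneg (hs.1 i) _) fun i =>
    pw_antitone (hs.1 i) (hs.le_one i) (by linarith [EReal.coe_lt_coe_iff.mp hrq])

lemma integrable_one_sub (hν : IsDislocation ν) : Integrable (fun s : ℕ → ℝ => 1 - s 0) ν := by
  refine ⟨(measurable_const.sub (measurable_pi_apply 0)).aestronglyMeasurable, ?_⟩
  rw [hasFiniteIntegral_iff_ofReal]
  · exact hν.int_one_sub
  · filter_upwards [hν.ae_inS] with s hs
    exact sub_nonneg.2 (hs.le_one 0)

lemma integrable_tail (hν : IsDislocation ν) {q : ℝ} (hq : pLow ν < q) :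
    Integrable (fun s => ∑' i, pw (s (i + 1)) (q + 1)) ν := by
  refine (integrable_toReal_of_lintegral_ne_top (measurable_tsum_ofReal_pw _).aemeasurable
    (hν.lintegral_tail_lt_top hq).ne).congr ?_
  filter_upwards [hν.ae_inS] with s hs
  rw [ENNReal.tsum_toReal_eq fun _ => ENNReal.ofReal_ne_top]
  exact tsum_congr fun i => ENNReal.toReal_ofReal (pw_nonneg (hs.1 _) _)

lemma integrable_one_sub_tsum_pw (hν : IsDislocation ν) {q : ℝ} (hq : pLow ν < q) :
    Integrable (fun s => 1 - ∑' i, pw (s i) (q + 1)) ν := by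
  have hmeas : Measurable fun s : ℕ → ℝ => 1 - ∑' i, pw (s i) (q + 1) :=
    measurable_const.sub <| Measurable.tsum fun i => (measurable_pw _).comp (measurable_pi_apply i)
  refine Integrable.mono' ((hν.integrable_one_sub.const_mul (max (q + 1) 1)).add
    ((hν.integrable_tail hq).const_mul 2)) hmeas.aestronglyMeasurable ?_
  filter_upwards [hν.ae_inS, hν.ae_apply_one_pos, hν.ae_summable_pw hq] with s hs h1 hsum
  have htail : Summable fun i => pw (s (i + 1)) (q + 1) := (summable_nat_add_iff 1).mpr hsum
  have hT0 : 0 ≤ ∑' i, pw (s (i + 1)) (q + 1) := tsum_nonneg fun i => pw_nonneg (hs.1 _) _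
  have hT1 : pw (s 1) (q + 1) ≤ ∑' i, pw (s (i + 1)) (q + 1) :=
    htail.le_tsum 0 fun i _ => pw_nonneg (hs.1 _) _
  have hbound := abs_one_sub_rpow_le (r := q + 1) h1 (hs.2.1 0) (hs.le_one 0)
  rw [← pw_of_pos h1, ← pw_of_pos (h1.trans_le (hs.2.1 0))] at hbound
  rw [hsum.tsum_eq_zero_add, Real.norm_eq_abs]
  calc |1 - (pw (s 0) (q + 1) + ∑' i, pw (s (i + 1)) (q + 1))|
      ≤ |1 - pw (s 0) (q + 1)| + ∑' i, pw (s (i + 1)) (q + 1) := by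
        rw [← sub_sub]; exact (abs_sub _ _).trans_eq (by rw [abs_of_nonneg hT0])
    _ ≤ max (q + 1) 1 * (1 - s 0) + 2 * ∑' i, pw (s (i + 1)) (q + 1) := by linarith

end IsDislocation

section Pointwise

variable {s : ℕ → ℝ} {D : Set ℝ}

lemma concaveOn_one_sub_tsum_pw (hs : inS s) (hD : Convex ℝ D)
    (hsum : ∀ q ∈ D, Summable fun i => pw (s i) (q + 1)) :
    ConcaveOn ℝ D fun q => 1 - ∑' i, pw (s i) (q + 1) := by
  refine (concaveOn_const 1 hD).sub (convexOn_tsum hD (fun i => ?_) hsum)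
  simpa [Function.comp_def, add_comm] using
    ((convexOn_pw (hs.1 i)).translate_right 1).subset (subset_univ D) hD

lemma strictMonoOn_one_sub_tsum_pw (hs : inS s) (h1 : 0 < s 1)
    (hsum : ∀ q ∈ D, Summable fun i => pw (s i) (q + 1)) :
    StrictMonoOn (fun q => 1 - ∑' i, pw (s i) (q + 1)) D := by
  have hanti : StrictAntiOn (fun q => ∑' i, pw (s i) (q + 1)) D :=
    strictAntiOn_tsum (i₀ := 1)
      (fun _ _ _ _ h => pw_strictAnti h1 (hs.apply_one_lt_one h1) (by linarith))
      (fun i _ _ _ _ h => pw_antitone (hs.1 i) (hs.le_one i) (by linarith)) hsum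
  exact fun x hx y hy hxy => sub_lt_sub_left (hanti hx hy hxy) 1

end Pointwise

/-- `Φ` is concave on `(p̲, ∞)`, and strictly increasing there if `ν ≠ 0`. -/
theorem phi_concave_strictMono (ν : Measure (ℕ → ℝ)) (hν : IsDislocation ν) :
    ConcaveOn ℝ {q : ℝ | pLow ν < (q : EReal)} (Phi ν) ∧
      (ν ≠ 0 → StrictMonoOn (Phi ν) {q : ℝ | pLow ν < (q : EReal)}) := by
  have hD : Convex ℝ {q : ℝ | pLow ν < (q : EReal)} :=
    (ordConnected_Ioi.preimage_mono EReal.coe_strictMono.monotone).convex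
  have hint : ∀ q ∈ {q : ℝ | pLow ν < (q : EReal)},
      Integrable (fun s => 1 - ∑' i, pw (s i) (q + 1)) ν :=
    fun _ hq => hν.integrable_one_sub_tsum_pw hq
  have hae := (hν.ae_inS.and hν.ae_apply_one_pos).and hν.ae_forall_summable_pw
  refine ⟨concaveOn_integral_of_ae hD hint ?_, strictMonoOn_integral_of_ae hint ?_⟩
  · exact hae.mono fun s ⟨⟨hs, _⟩, hsum⟩ => concaveOn_one_sub_tsum_pw hs hD hsum
  · exact hae.mono fun s ⟨⟨hs, h1⟩, hsum⟩ => strictMonoOn_one_sub_tsum_pw hs h1 hsum
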